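/- For the normalized radial eigenfunctions eₙ(x) = sin(nπ|x|)/|x| on the unit ball B₃ ⊂ ℝ³, there is a constant C such that for all positive integers n, n₁, n₂, n₃: |∫_{B₃} eₙ e_{n₁} e_{n₂} e_{n₃} dx| ≤ C · min(n, n₁, n₂, n₃). -/

import Mathlib

/-!
In polar coordinates the integral is `4π ∫₀¹ ∏ᵢ sin (aᵢ r) dr / r²` with `aᵢ = nᵢ π`. The product of
the four sines is a combination of four terms `sin (a r) sin (x r)` with `x = ±b ± c ± d`, and
`2 sin (a r) sin (x r) = cos ((x - a) r) - cos ((x + a) r)`, so everything reduces to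
`ψ y = ∫₀¹ (cos (y r) - 1) / r² dr`. Scaling shows `∫₀^∞ (cos (y r) - 1) / r² dr = κ |y|` with
`κ = ∫₀^∞ (cos u - 1) / u² du`, while the part over `(1, ∞)` is at most `∫₁^∞ 2 / r² dr = 2`.
Hence `ψ y = κ |y| + O(1)`, so `ψ (x - a) - ψ (x + a) = O(1 + |a|)`; take for `a` the smallest
frequency.
-/

open Real MeasureTheory Set Metric

section RadialIntegral

variable {E : Type*} [NormedAddCommGroup E] [NormedSpace ℝ E] [MeasurableSpace E]
  [BorelSpace E] [FiniteDimensional ℝ E] (μ : Measure E) [μ.IsAddHaarMeasure]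

theorem setIntegral_ball_fun_norm_addHaar {F : Type*} [NormedAddCommGroup F] [NormedSpace ℝ F]
    [Nontrivial E] (f : ℝ → F) {R : ℝ} (hR : 0 ≤ R) :
    ∫ x in ball (0 : E) R, f ‖x‖ ∂μ = Module.finrank ℝ E • μ.real (ball 0 1) •
      ∫ y in (0 : ℝ)..R, y ^ (Module.finrank ℝ E - 1) • f y := by
  have hind :
      (ball (0 : E) R).indicator (fun x => f ‖x‖) = fun x => (Iio R).indicator f ‖x‖ := by
    ext x
    simp [indicator]
  have hsmul : (fun y : ℝ => y ^ (Module.finrank ℝ E - 1) • (Iio R).indicator f y) =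
      (Iio R).indicator fun y => y ^ (Module.finrank ℝ E - 1) • f y := by
    ext y
    simp [indicator]
  rw [← integral_indicator measurableSet_ball, hind, integral_fun_norm_addHaar, hsmul,
    setIntegral_indicator measurableSet_Iio, Ioi_inter_Iio, intervalIntegral.integral_of_le hR,
    integral_Ioc_eq_integral_Ioo]

theorem setIntegral_ball_sin_mul_norm_div_norm (hE : Module.finrank ℝ E = 3) (a b c d : ℝ) :
    ∫ x in ball (0 : E) 1, sin (a * ‖x‖) / ‖x‖ * (sin (b * ‖x‖) / ‖x‖) *
        (sin (c * ‖x‖) / ‖x‖) * (sin (d * ‖x‖) / ‖x‖) ∂μ =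
      3 * μ.real (ball 0 1) *
        ∫ r in (0 : ℝ)..1, sin (a * r) * sin (b * r) * sin (c * r) * sin (d * r) / r ^ 2 := by
  have : Nontrivial E := Module.nontrivial_of_finrank_eq_succ hE
  have hpolar := setIntegral_ball_fun_norm_addHaar μ (fun r => sin (a * r) / r *
    (sin (b * r) / r) * (sin (c * r) / r) * (sin (d * r) / r)) zero_le_one
  beta_reduce at hpolar
  rw [hpolar, hE, nsmul_eq_mul, smul_eq_mul, Nat.cast_ofNat, mul_assoc]
  congr 2
  refine intervalIntegral.integral_congr fun r _ => ?_
  rcases eq_or_ne r 0 with rfl | hr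
  · simp
  · simp only [smul_eq_mul]
    field_simp

end RadialIntegral

lemma abs_cos_sub_one_le_sq_div_two (x : ℝ) : |cos x - 1| ≤ x ^ 2 / 2 := by
  rw [abs_sub_comm, abs_of_nonneg (sub_nonneg.2 (cos_le_one x))]
  linarith [one_sub_sq_div_two_le_cos (x := x)]

lemma abs_cos_mul_sub_one_div_sq_le_sq_div_two (y r : ℝ) :
    |(cos (y * r) - 1) / r ^ 2| ≤ y ^ 2 / 2 := by
  rcases eq_or_ne r 0 with rfl | hr
  · rw [zero_pow two_ne_zero, div_zero, abs_zero]
    positivity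
  · rw [abs_div, abs_of_nonneg (sq_nonneg r), div_le_iff₀ (by positivity)]
    calc |cos (y * r) - 1| ≤ (y * r) ^ 2 / 2 := abs_cos_sub_one_le_sq_div_two _
      _ = y ^ 2 / 2 * r ^ 2 := by ring

lemma abs_cos_mul_sub_one_div_sq_le_two_div_sq (y r : ℝ) :
    |(cos (y * r) - 1) / r ^ 2| ≤ 2 / r ^ 2 := by
  rw [abs_div, abs_of_nonneg (sq_nonneg r)]
  gcongr
  exact (abs_sub _ _).trans (by linarith [abs_cos_le_one (y * r), abs_one (α := ℝ)])

lemma integrableOn_Ioi_cos_mul_sub_one_div_sq (y : ℝ) :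
    IntegrableOn (fun r => (cos (y * r) - 1) / r ^ 2) (Ioi 0) := by
  have hmeas {μ : Measure ℝ} : AEStronglyMeasurable (fun r => (cos (y * r) - 1) / r ^ 2) μ :=
    (by fun_prop : Measurable fun r : ℝ => (cos (y * r) - 1) / r ^ 2).aestronglyMeasurable
  rw [← Ioc_union_Ioi_eq_Ioi zero_le_one]
  refine IntegrableOn.union ?_ ?_
  · exact (integrableOn_const (C := y ^ 2 / 2) measure_Ioc_lt_top.ne).mono' hmeas
      (ae_of_all _ fun r => abs_cos_mul_sub_one_div_sq_le_sq_div_two y r)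
  · have hdom := (integrableOn_Ioi_rpow_of_lt (by norm_num : (-2 : ℝ) < -1) one_pos).const_mul 2
    refine hdom.mono' hmeas
      ((ae_restrict_iff' measurableSet_Ioi).2 (ae_of_all _ fun r (hr : 1 < r) => ?_))
    rw [rpow_neg (by linarith), rpow_two, Real.norm_eq_abs, ← div_eq_mul_inv]
    exact abs_cos_mul_sub_one_div_sq_le_two_div_sq y r

lemma abs_setIntegral_Ioi_one_cos_mul_sub_one_div_sq_le (y : ℝ) :
    |∫ r in Ioi 1, (cos (y * r) - 1) / r ^ 2| ≤ 2 := by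
  have hint := (integrableOn_Ioi_rpow_of_lt (by norm_num : (-2 : ℝ) < -1) one_pos).const_mul 2
  calc |∫ r in Ioi 1, (cos (y * r) - 1) / r ^ 2| ≤ ∫ r in Ioi 1, 2 * r ^ (-2 : ℝ) := by
        refine (Real.norm_eq_abs _).symm.trans_le <| norm_integral_le_of_norm_le hint
          ((ae_restrict_iff' measurableSet_Ioi).2 (ae_of_all _ fun r (hr : 1 < r) => ?_))
        rw [rpow_neg (by linarith), rpow_two, Real.norm_eq_abs, ← div_eq_mul_inv]
        exact abs_cos_mul_sub_one_div_sq_le_two_div_sq y r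
    _ = 2 := by
        rw [integral_const_mul, integral_Ioi_rpow_of_lt (by norm_num) one_pos]
        norm_num

lemma integral_Ioi_cos_mul_sub_one_div_sq (y : ℝ) :
    ∫ r in Ioi 0, (cos (y * r) - 1) / r ^ 2 = |y| * ∫ u in Ioi 0, (cos u - 1) / u ^ 2 := by
  have hcos : ∀ r, cos (y * r) = cos (|y| * r) := by
    intro r
    rcases abs_choice y with h | h <;> rw [h]
    rw [neg_mul, cos_neg]
  simp only [hcos]
  rcases (abs_nonneg y).eq_or_lt with h | h
  · simp [← h]
  · have hscale : ∀ r, (cos (|y| * r) - 1) / r ^ 2 =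
        |y| ^ 2 * ((cos (|y| * r) - 1) / (|y| * r) ^ 2) := by
      intro r
      field_simp
    simp only [hscale]
    rw [integral_const_mul, integral_comp_mul_left_Ioi (fun u => (cos u - 1) / u ^ 2) 0 h,
      mul_zero, smul_eq_mul]
    field_simp

lemma abs_integral_cos_mul_sub_one_div_sq_sub_le (y : ℝ) :
    |(∫ r in (0 : ℝ)..1, (cos (y * r) - 1) / r ^ 2) - |y| * ∫ u in Ioi 0, (cos u - 1) / u ^ 2|
      ≤ 2 := by
  have hint := integrableOn_Ioi_cos_mul_sub_one_div_sq y
  rw [← integral_Ioi_cos_mul_sub_one_div_sq, ← intervalIntegral.integral_interval_add_Ioi hint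
    (hint.mono_set (Ioi_subset_Ioi zero_le_one)), sub_add_cancel_left, abs_neg]
  exact abs_setIntegral_Ioi_one_cos_mul_sub_one_div_sq_le y

lemma intervalIntegrable_cos_mul_sub_one_div_sq (y : ℝ) :
    IntervalIntegrable (fun r => (cos (y * r) - 1) / r ^ 2) volume 0 1 :=
  (intervalIntegrable_iff_integrableOn_Ioc_of_le zero_le_one).2
    ((integrableOn_Ioi_cos_mul_sub_one_div_sq y).mono_set Ioc_subset_Ioi_self)

lemma sin_mul_sin_div_sq_eq (a x r : ℝ) :
    sin (a * r) * sin (x * r) / r ^ 2 =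
      ((cos ((x - a) * r) - 1) / r ^ 2 - (cos ((x + a) * r) - 1) / r ^ 2) / 2 := by
  rw [sub_mul, add_mul, cos_sub, cos_add]
  ring

lemma intervalIntegrable_sin_mul_sin_div_sq (a x : ℝ) :
    IntervalIntegrable (fun r => sin (a * r) * sin (x * r) / r ^ 2) volume 0 1 := by
  simp only [sin_mul_sin_div_sq_eq]
  exact ((intervalIntegrable_cos_mul_sub_one_div_sq _).sub
    (intervalIntegrable_cos_mul_sub_one_div_sq _)).div_const 2

lemma abs_integral_sin_mul_sin_div_sq_le (a x : ℝ) :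
    |∫ r in (0 : ℝ)..1, sin (a * r) * sin (x * r) / r ^ 2| ≤
      2 + |a| * |∫ u in Ioi 0, (cos u - 1) / u ^ 2| := by
  set κ := ∫ u in Ioi 0, (cos u - 1) / u ^ 2
  simp only [sin_mul_sin_div_sq_eq]
  rw [intervalIntegral.integral_div, intervalIntegral.integral_sub
    (intervalIntegrable_cos_mul_sub_one_div_sq _) (intervalIntegrable_cos_mul_sub_one_div_sq _)]
  have hminus := abs_le.1 (abs_integral_cos_mul_sub_one_div_sq_sub_le (x - a))
  have hplus := abs_le.1 (abs_integral_cos_mul_sub_one_div_sq_sub_le (x + a))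
  have hdiff : |(|x - a| - |x + a|) * κ| ≤ 2 * |a| * |κ| := by
    rw [abs_mul]
    gcongr
    calc |(|x - a| - |x + a|)| ≤ |(x - a) - (x + a)| := abs_abs_sub_abs_le_abs_sub _ _
      _ = 2 * |a| := by
        rw [show (x - a) - (x + a) = -(2 * a) by ring, abs_neg, abs_mul, abs_two]
  rw [sub_mul] at hdiff
  have hdiff' := abs_le.1 hdiff
  rw [abs_div, abs_two, div_le_iff₀ two_pos, abs_le]
  constructor <;> linarith

lemma abs_integral_sin_mul_sin_mul_sin_mul_sin_div_sq_le (a b c d : ℝ) :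
    |∫ r in (0 : ℝ)..1, sin (a * r) * sin (b * r) * sin (c * r) * sin (d * r) / r ^ 2| ≤
      2 + |a| * |∫ u in Ioi 0, (cos u - 1) / u ^ 2| := by
  have hexpand : ∀ r : ℝ, sin (a * r) * sin (b * r) * sin (c * r) * sin (d * r) / r ^ 2 =
      (sin (a * r) * sin ((b - c + d) * r) / r ^ 2
        + sin (a * r) * sin ((-b + c + d) * r) / r ^ 2
        - sin (a * r) * sin ((b + c + d) * r) / r ^ 2
        + sin (a * r) * sin ((b + c - d) * r) / r ^ 2) / 4 := by
    intro r
    simp only [add_mul, sub_mul, neg_mul, sin_add, sin_sub, cos_add, cos_sub, sin_neg, cos_neg]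
    ring
  have h := intervalIntegrable_sin_mul_sin_div_sq a
  simp only [hexpand]
  rw [intervalIntegral.integral_div, intervalIntegral.integral_add (((h _).add (h _)).sub (h _))
    (h _), intervalIntegral.integral_sub ((h _).add (h _)) (h _),
    intervalIntegral.integral_add (h _) (h _)]
  have h1 := abs_le.1 (abs_integral_sin_mul_sin_div_sq_le a (b - c + d))
  have h2 := abs_le.1 (abs_integral_sin_mul_sin_div_sq_le a (-b + c + d))
  have h3 := abs_le.1 (abs_integral_sin_mul_sin_div_sq_le a (b + c + d))
  have h4 := abs_le.1 (abs_integral_sin_mul_sin_div_sq_le a (b + c - d))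
  rw [abs_div, abs_of_pos (four_pos : (0 : ℝ) < 4), div_le_iff₀ four_pos, abs_le]
  constructor <;> linarith

lemma abs_integral_sin_mul_sin_mul_sin_mul_sin_div_sq_le_min (a b c d : ℝ) :
    |∫ r in (0 : ℝ)..1, sin (a * r) * sin (b * r) * sin (c * r) * sin (d * r) / r ^ 2| ≤
      2 + min (min |a| |b|) (min |c| |d|) * |∫ u in Ioi 0, (cos u - 1) / u ^ 2| := by
  set I := fun a b c d : ℝ =>
    ∫ r in (0 : ℝ)..1, sin (a * r) * sin (b * r) * sin (c * r) * sin (d * r) / r ^ 2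
  have hb : I a b c d = I b a c d :=
    intervalIntegral.integral_congr fun r _ => by ring
  have hc : I a b c d = I c a b d :=
    intervalIntegral.integral_congr fun r _ => by ring
  have hd : I a b c d = I d a b c :=
    intervalIntegral.integral_congr fun r _ => by ring
  have key := abs_integral_sin_mul_sin_mul_sin_mul_sin_div_sq_le
  change |I a b c d| ≤ _
  rcases min_choice (min |a| |b|) (min |c| |d|) with h | h <;> rw [h]
  · rcases min_choice |a| |b| with h' | h' <;> rw [h']
    · exact key a b c d
    · exact hb ▸ key b a c d
  · rcases min_choice |c| |d| with h' | h' <;> rw [h']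
    · exact hc ▸ key c a b d
    · exact hd ▸ key d a b c

/-- For the radial eigenfunctions `eₙ(x) = sin(nπ|x|)/|x|` on the unit ball
`B₃ ⊂ ℝ³`, there is a constant `C` such that for all positive integers
`n, n₁, n₂, n₃`, `|∫_{B₃} eₙ e_{n₁} e_{n₂} e_{n₃} dx| ≤ C · min(n,n₁,n₂,n₃)`. -/
theorem eigenfunction_product_bound :
    ∃ C : ℝ, 0 < C ∧ ∀ n n₁ n₂ n₃ : ℕ+,
      |∫ x in Metric.ball (0 : EuclideanSpace ℝ (Fin 3)) 1,
          (Real.sin ((n : ℝ) * π * ‖x‖) / ‖x‖) *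
          (Real.sin ((n₁ : ℝ) * π * ‖x‖) / ‖x‖) *
          (Real.sin ((n₂ : ℝ) * π * ‖x‖) / ‖x‖) *
          (Real.sin ((n₃ : ℝ) * π * ‖x‖) / ‖x‖)|
        ≤ C * ((min (min n n₁) (min n₂ n₃) : ℕ+) : ℝ) := by
  set v := (volume : Measure (EuclideanSpace ℝ (Fin 3))).real (ball 0 1)
  set κ := |∫ u in Ioi 0, (cos u - 1) / u ^ 2|
  have hv : 0 < v := ENNReal.toReal_pos (measure_ball_pos volume 0 one_pos).ne'
    measure_ball_lt_top.ne
  refine ⟨3 * v * (2 + π * κ), by positivity, fun n n₁ n₂ n₃ => ?_⟩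
  have hmono : Monotone fun k : ℕ+ => |(k : ℝ) * π| := fun k l hkl => by
    simp only [abs_mul, abs_of_pos pi_pos, Nat.abs_cast]
    gcongr
    exact_mod_cast hkl
  set m := min (min n n₁) (min n₂ n₃)
  have hm : min (min |(n : ℝ) * π| |(n₁ : ℝ) * π|) (min |(n₂ : ℝ) * π| |(n₃ : ℝ) * π|) =
      m * π := by
    simp only [m, ← hmono.map_min, abs_of_pos (by positivity : 0 < (m : ℝ) * π)]
  have hI := abs_integral_sin_mul_sin_mul_sin_mul_sin_div_sq_le_min (n * π) (n₁ * π) (n₂ * π)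
    (n₃ * π)
  rw [hm] at hI
  have hm1 : (1 : ℝ) ≤ m := by exact_mod_cast m.pos
  rw [setIntegral_ball_sin_mul_norm_div_norm _ finrank_euclideanSpace_fin, abs_mul,
    abs_of_pos (by positivity)]
  calc 3 * v * |∫ r in (0 : ℝ)..1, sin (n * π * r) * sin (n₁ * π * r) * sin (n₂ * π * r) *
        sin (n₃ * π * r) / r ^ 2| ≤ 3 * v * (2 + m * π * κ) := by gcongr
    _ ≤ 3 * v * (2 + π * κ) * m := by nlinarith
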